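/- arXiv:1309.0725 — 3 statements merged into one kernel-verified Lean document; each statement's English description precedes it below -/
import Mathlib

section
/- Let n ≥ 2 and let Q_n = conv(C_{n-1} × {0} ∪ {e_n, -e_n}) ⊂ ℝ^n be the bipyramid over the (n-1)-dimensional cube. Then the linear Ehrhart coefficient of Q_n is given by ℓ_1(Q_n) = 2(n-1) + (4 - 2^n) · B_{n-1}, where B_j denotes the j-th Bernoulli number. -/
open MeasureTheory Polynomial Pointwise

/-- The number of integer lattice points contained in a subset of `ℝ^n`. -/
noncomputable def latticePointCount {n : ℕ} (S : Set (Fin n → ℝ)) : ℕ :=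
  {v : Fin n → ℤ | (fun i => (v i : ℝ)) ∈ S}.ncard

/-- A lattice polytope in `ℝ^n`: the convex hull of finitely many integer points. -/
def IsLatticePolytope {n : ℕ} (P : Set (Fin n → ℝ)) : Prop :=
  ∃ V : Finset (Fin n → ℤ),
    P = convexHull ℝ ((fun v : Fin n → ℤ => fun i => (v i : ℝ)) '' (V : Set (Fin n → ℤ)))

/-- `L` is the Ehrhart polynomial of `P`: for every positive integer `k` its value at `k`
is the number of lattice points of the dilate `kP`. -/
def IsEhrhartPoly {n : ℕ} (P : Set (Fin n → ℝ)) (L : Polynomial ℝ) : Prop :=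
  ∀ k : ℕ, 0 < k → L.eval (k : ℝ) = latticePointCount ((k : ℝ) • P)

/-- The bipyramid `Q_n = conv(C_{n-1} × {0} ∪ {e_n, -e_n})` over the cube
`C_{n-1} = [-1,1]^{n-1}`, sitting in `ℝ^n` (here `n ≥ 2`). -/
noncomputable def bipyramidQ (n : ℕ) (hn : 2 ≤ n) : Set (Fin n → ℝ) :=
  convexHull ℝ
    ({x : Fin n → ℝ | (∀ i, |x i| ≤ 1) ∧ x ⟨n - 1, by omega⟩ = 0} ∪
     {Pi.single (⟨n - 1, by omega⟩ : Fin n) (1 : ℝ),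
      -Pi.single (⟨n - 1, by omega⟩ : Fin n) (1 : ℝ)})

/-!
Write `m = n - 1` and slice `kQ_n` by the last coordinate `t`: the slice is the cube
`(k - |t|) C_m`, which holds `(2(k - |t|) + 1)^m` lattice points. Summing over `|t| ≤ k` gives
`(2k + 1)^m + 2 ∑_{j<k} (2j + 1)^m`, and the sum of odd powers is `S(2k) - 2^m S(k)` for the
power sum `S(N) = ∑_{j<N} j^m`. By Faulhaber's formula the linear coefficient of `S` is `B_m`,
so the linear coefficient of the count is `2m + 2 (2 - 2^m) B_m`.
-/

open Finset

theorem Finset.sum_range_two_mul {M : Type*} [AddCommMonoid M] (f : ℕ → M) (k : ℕ) :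
    ∑ j ∈ range (2 * k), f j
      = ∑ j ∈ range k, f (2 * j) + ∑ j ∈ range k, f (2 * j + 1) := by
  induction k with
  | zero => simp
  | succ k ih =>
    rw [Nat.mul_succ, sum_range_succ, sum_range_succ, ih, sum_range_succ, sum_range_succ]
    abel

theorem Finset.sum_Icc_neg_natAbs {M : Type*} [AddCommMonoid M] (f : ℕ → M) (k : ℕ) :
    ∑ t ∈ Icc (-(k : ℤ)) k, f t.natAbs = f 0 + 2 • ∑ j ∈ range k, f (j + 1) := by
  induction k with
  | zero => simp
  | succ k ih =>
    have hIcc : Icc (-((k + 1 : ℕ) : ℤ)) (k + 1 : ℕ)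
        = insert (-(k + 1 : ℤ)) (insert (k + 1 : ℤ) (Icc (-(k : ℤ)) k)) := by
      ext t; simp only [mem_insert, mem_Icc]; omega
    rw [hIcc, sum_insert (by simp; omega), sum_insert (by simp), ih, sum_range_succ]
    simp only [smul_add, two_smul]
    have h1 : (-(k + 1 : ℤ)).natAbs = k + 1 := by omega
    have h2 : (k + 1 : ℤ).natAbs = k + 1 := by omega
    rw [h1, h2]
    abel

theorem sum_range_odd_pow {R : Type*} [CommRing R] (m k : ℕ) :
    ∑ j ∈ range k, (2 * (j : R) + 1) ^ m
      = ∑ j ∈ range (2 * k), (j : R) ^ m - 2 ^ m * ∑ j ∈ range k, (j : R) ^ m := by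
  rw [sum_range_two_mul, mul_sum]
  push_cast
  simp only [mul_pow]
  ring

noncomputable def powerSumPoly (m : ℕ) : ℝ[X] :=
  ∑ i ∈ range (m + 1),
    C ((_root_.bernoulli i : ℝ) * (m + 1).choose i / (m + 1)) * X ^ (m + 1 - i)

theorem eval_powerSumPoly (m N : ℕ) :
    (powerSumPoly m).eval (N : ℝ) = ∑ j ∈ range N, (j : ℝ) ^ m := by
  have hfaulhaber := congrArg ((↑) : ℚ → ℝ) (sum_range_pow N m)
  push_cast at hfaulhaber
  simp only [powerSumPoly, eval_finsetSum, eval_mul, eval_C, eval_pow, eval_X, hfaulhaber]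
  exact sum_congr rfl fun i _ => by ring

theorem coeff_one_powerSumPoly (m : ℕ) :
    (powerSumPoly m).coeff 1 = _root_.bernoulli m := by
  rw [powerSumPoly, finsetSum_coeff, sum_eq_single m]
  · rw [coeff_C_mul_X_pow, Nat.add_sub_cancel_left, if_pos rfl, Nat.choose_succ_self_right]
    push_cast
    field_simp
  · intro i hi him
    rw [coeff_C_mul_X_pow, if_neg]
    have := mem_range.1 hi
    omega
  · simp

noncomputable def bipyramidEhrhartPoly (m : ℕ) : ℝ[X] :=
  ((X + 1) ^ m).comp (C 2 * X)
    + C 2 * ((powerSumPoly m).comp (C 2 * X) - C (2 ^ m) * powerSumPoly m)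

theorem eval_bipyramidEhrhartPoly (m k : ℕ) :
    (bipyramidEhrhartPoly m).eval (k : ℝ)
      = (2 * k + 1) ^ m + 2 * ∑ j ∈ range k, (2 * (j : ℝ) + 1) ^ m := by
  have h2k : (2 * k : ℝ) = ((2 * k : ℕ) : ℝ) := by push_cast; rfl
  simp only [bipyramidEhrhartPoly, eval_add, eval_mul, eval_sub, eval_comp, eval_C, eval_X,
    eval_pow, eval_one, h2k, eval_powerSumPoly, sum_range_odd_pow]

theorem coeff_one_bipyramidEhrhartPoly (m : ℕ) :
    (bipyramidEhrhartPoly m).coeff 1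
      = 2 * m + (4 - 2 ^ (m + 1)) * _root_.bernoulli m := by
  simp only [bipyramidEhrhartPoly, coeff_add, coeff_C_mul, coeff_sub, comp_C_mul_X_coeff,
    coeff_X_add_one_pow, coeff_one_powerSumPoly, Nat.choose_one_right]
  ring

section CubeBipyramid

variable {ι : Type*}

def cubeBipyramid (l : ι) (r : ℝ) : Set (ι → ℝ) :=
  {x | |x l| ≤ r ∧ ∀ i ≠ l, |x i| + |x l| ≤ r}

theorem convex_cubeBipyramid (l : ι) (r : ℝ) : Convex ℝ (cubeBipyramid l r) := by
  rintro x ⟨hxl, hx⟩ y ⟨hyl, hy⟩ a b ha hb hab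
  have hcomb : ∀ i, |(a • x + b • y) i| ≤ a * |x i| + b * |y i| := fun i => by
    simpa [abs_mul, abs_of_nonneg ha, abs_of_nonneg hb] using abs_add_le (a * x i) (b * y i)
  have hr : a * r + b * r = r := by rw [← add_mul, hab, one_mul]
  refine ⟨?_, fun i hi => ?_⟩
  · linarith [hcomb l, mul_le_mul_of_nonneg_left hxl ha, mul_le_mul_of_nonneg_left hyl hb]
  · linarith [hcomb i, hcomb l, mul_le_mul_of_nonneg_left (hx i hi) ha,
      mul_le_mul_of_nonneg_left (hy i hi) hb]

theorem smul_cubeBipyramid (l : ι) {c : ℝ} (hc : 0 < c) (r : ℝ) :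
    c • cubeBipyramid l r = cubeBipyramid l (c * r) := by
  ext x
  simp only [Set.mem_smul_set_iff_inv_smul_mem₀ hc.ne', cubeBipyramid, Set.mem_ofPred_eq,
    Pi.smul_apply, smul_eq_mul, abs_mul, abs_inv, abs_of_pos hc, ← mul_add,
    inv_mul_le_iff₀ hc]

theorem cubeBipyramid_subset_convexHull [DecidableEq ι] (l : ι) :
    cubeBipyramid l 1 ⊆ convexHull ℝ
      ({x : ι → ℝ | (∀ i, |x i| ≤ 1) ∧ x l = 0} ∪
        {Pi.single l 1, -Pi.single l 1}) := by
  set G := {x : ι → ℝ | (∀ i, |x i| ≤ 1) ∧ x l = 0} ∪ {Pi.single l 1, -Pi.single l 1}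
  rintro x ⟨hxl, hx⟩
  set t := x l
  -- `x` lies on the segment from the apex on its side to the point `y` of the cube slice.
  set apex : ι → ℝ := if 0 ≤ t then Pi.single l 1 else -Pi.single l 1
  set y : ι → ℝ := fun i => if i = l then 0 else x i / (1 - |t|)
  have hapex : apex ∈ G := by
    by_cases ht : 0 ≤ t <;> simp [apex, G, ht]
  have hy : y ∈ G := by
    refine Or.inl ⟨fun i => ?_, by simp [y]⟩
    by_cases hi : i = l
    · simp [y, hi]
    · simp only [y, if_neg hi, abs_div]
      refine div_le_one_of_le₀ ?_ (abs_nonneg _)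
      linarith [hx i hi, le_abs_self (1 - |t|)]
  have hxy : x = (1 - |t|) • y + |t| • apex := by
    funext i
    by_cases hi : i = l
    · subst hi
      by_cases ht : 0 ≤ t
      · simp [y, apex, t, ht, abs_of_nonneg ht]
      · simp [y, apex, t, ht, abs_of_neg (not_le.1 ht)]
    · have hapex_i : apex i = 0 := by
        by_cases ht : 0 ≤ t <;> simp [apex, ht, Pi.single_eq_of_ne hi]
      simp only [Pi.add_apply, Pi.smul_apply, smul_eq_mul, hapex_i, mul_zero, add_zero, y,
        if_neg hi]
      rcases eq_or_ne (1 - |t|) 0 with h0 | h0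
      · have hxi : |x i| ≤ 0 := by linarith [hx i hi]
        rw [h0, zero_mul, abs_nonpos_iff.1 hxi]
      · field_simp
  rw [hxy]
  exact convex_convexHull ℝ G (subset_convexHull ℝ G hy) (subset_convexHull ℝ G hapex)
    (by linarith) (abs_nonneg t) (by ring)

theorem convexHull_cubeSlice_union_apices [DecidableEq ι] (l : ι) :
    convexHull ℝ
      ({x : ι → ℝ | (∀ i, |x i| ≤ 1) ∧ x l = 0} ∪ {Pi.single l 1, -Pi.single l 1})
      = cubeBipyramid l 1 := by
  refine (convexHull_min ?_ (convex_cubeBipyramid l 1)).antisymm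
    (cubeBipyramid_subset_convexHull l)
  rintro x ((⟨hx, hxl⟩ : _ ∧ _) | rfl | rfl)
  · exact ⟨by simp [hxl], fun i _ => by simpa [hxl] using hx i⟩
  all_goals exact ⟨by simp, fun i hi => by simp [Pi.single_eq_of_ne hi]⟩

variable [Fintype ι] [DecidableEq ι]

noncomputable def cubeBipyramidLatticePoints (l : ι) (k : ℕ) : Finset (ι → ℤ) :=
  {v ∈ Fintype.piFinset fun _ => Icc (-(k : ℤ)) k | ∀ i ≠ l, |v i| + |v l| ≤ k}

theorem mem_cubeBipyramidLatticePoints {l : ι} {k : ℕ} {v : ι → ℤ} :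
    v ∈ cubeBipyramidLatticePoints l k ↔ |v l| ≤ k ∧ ∀ i ≠ l, |v i| + |v l| ≤ k := by
  simp only [cubeBipyramidLatticePoints, mem_filter, Fintype.mem_piFinset, mem_Icc, ← abs_le]
  refine ⟨fun ⟨hbox, h⟩ => ⟨hbox l, h⟩, fun ⟨hl, h⟩ => ⟨fun i => ?_, h⟩⟩
  by_cases hi : i = l
  · exact hi ▸ hl
  · linarith [h i hi, abs_nonneg (v l)]

theorem mem_cubeBipyramidLatticePoints_iff_cast_mem {l : ι} {k : ℕ} {v : ι → ℤ} :
    v ∈ cubeBipyramidLatticePoints l k ↔ (fun i => (v i : ℝ)) ∈ cubeBipyramid l k := by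
  simp only [mem_cubeBipyramidLatticePoints, cubeBipyramid, Set.mem_ofPred_eq, ← Int.cast_abs]
  norm_cast

theorem card_filter_apply_eq_cubeBipyramidLatticePoints (l : ι) {k : ℕ} {t : ℤ}
    (ht : |t| ≤ k) :
    #{v ∈ cubeBipyramidLatticePoints l k | v l = t}
      = (2 * (k - t.natAbs) + 1) ^ (Fintype.card ι - 1) := by
  set r : ℤ := k - |t|
  have hfiber : {v ∈ cubeBipyramidLatticePoints l k | v l = t}
      = Fintype.piFinset (Function.update (fun _ => Icc (-r) r) l {t}) := by
    ext v
    simp only [mem_filter, mem_cubeBipyramidLatticePoints, Fintype.mem_piFinset,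
      Function.update_apply]
    constructor
    · rintro ⟨⟨-, h⟩, rfl⟩ i
      by_cases hi : i = l
      · simp [hi]
      · rw [if_neg hi, mem_Icc, ← abs_le]
        linarith [h i hi]
    · intro h
      have hl : v l = t := by simpa using h l
      refine ⟨⟨hl ▸ ht, fun i hi => ?_⟩, hl⟩
      have hi' := abs_le.2 (mem_Icc.1 (by simpa [hi] using h i))
      rw [hl]
      linarith [show r = k - |t| from rfl]
  rw [hfiber, Fintype.card_piFinset, Fintype.prod_eq_mul_prod_compl l, Function.update_self,
    card_singleton, one_mul, prod_congr rfl fun i hi => by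
      rw [Function.update_of_ne (by simpa using hi)],
    prod_const, card_compl, card_singleton, Int.card_Icc]
  rw [Int.abs_eq_natAbs] at ht
  congr 1
  simp only [r, Int.abs_eq_natAbs]
  omega

theorem card_cubeBipyramidLatticePoints (l : ι) (k : ℕ) :
    #(cubeBipyramidLatticePoints l k)
      = (2 * k + 1) ^ (Fintype.card ι - 1)
        + 2 * ∑ j ∈ range k, (2 * j + 1) ^ (Fintype.card ι - 1) := by
  have hmaps : ∀ v ∈ cubeBipyramidLatticePoints l k, v l ∈ Icc (-(k : ℤ)) k := fun v hv =>
    mem_Icc.2 (abs_le.1 (mem_cubeBipyramidLatticePoints.1 hv).1)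
  rw [card_eq_sum_card_fiberwise hmaps,
    sum_congr rfl fun t ht =>
      card_filter_apply_eq_cubeBipyramidLatticePoints l (abs_le.2 (mem_Icc.1 ht)),
    sum_Icc_neg_natAbs (fun j => (2 * (k - j) + 1) ^ (Fintype.card ι - 1)), smul_eq_mul,
    ← sum_range_reflect]
  congr 2
  refine sum_congr rfl fun j hj => ?_
  have := mem_range.1 hj
  congr 3
  omega

end CubeBipyramid

theorem IsEhrhartPoly.unique {n : ℕ} {P : Set (Fin n → ℝ)} {L L' : ℝ[X]}
    (hL : IsEhrhartPoly P L) (hL' : IsEhrhartPoly P L') : L = L' := by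
  refine eq_of_infinite_eval_eq L L' (Set.infinite_of_injective_forall_mem
    (f := fun k : ℕ => ((k + 1 : ℕ) : ℝ)) (fun a b hab => by simpa using hab) fun k => ?_)
  simp only [Set.mem_ofPred_eq, hL _ k.succ_pos, hL' _ k.succ_pos]

theorem bipyramidQ_eq_cubeBipyramid (n : ℕ) (hn : 2 ≤ n) :
    bipyramidQ n hn = cubeBipyramid ⟨n - 1, by omega⟩ 1 :=
  convexHull_cubeSlice_union_apices _

theorem latticePointCount_smul_bipyramidQ (n : ℕ) (hn : 2 ≤ n) {k : ℕ} (hk : 0 < k) :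
    latticePointCount ((k : ℝ) • bipyramidQ n hn)
      = #(cubeBipyramidLatticePoints (⟨n - 1, by omega⟩ : Fin n) k) := by
  rw [bipyramidQ_eq_cubeBipyramid, smul_cubeBipyramid _ (Nat.cast_pos.2 hk), mul_one,
    latticePointCount, ← Set.ncard_coe_finset]
  congr 1
  ext v
  exact mem_cubeBipyramidLatticePoints_iff_cast_mem.symm

theorem isEhrhartPoly_bipyramidQ (n : ℕ) (hn : 2 ≤ n) :
    IsEhrhartPoly (bipyramidQ n hn) (bipyramidEhrhartPoly (n - 1)) := by
  intro k hk
  rw [eval_bipyramidEhrhartPoly, latticePointCount_smul_bipyramidQ n hn hk,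
    card_cubeBipyramidLatticePoints, Fintype.card_fin]
  push_cast
  rfl

theorem bipyramid_linear_ehrhart_coeff (n : ℕ) (hn : 2 ≤ n)
    (L : Polynomial ℝ) (hL : IsEhrhartPoly (bipyramidQ n hn) L) :
    L.coeff 1 = 2 * ((n : ℝ) - 1) + (4 - 2 ^ n) * ((bernoulli (n - 1) : ℚ) : ℝ) := by
  rw [hL.unique (isEhrhartPoly_bipyramidQ n hn), coeff_one_bipyramidEhrhartPoly,
    Nat.sub_add_cancel (by omega : 1 ≤ n), Nat.cast_sub (by omega : 1 ≤ n), Nat.cast_one]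
end

section
/- Let a > 0 be a real number and let P ⊂ ℝ^n be an n-dimensional lattice polytope such that all n complex roots of its Ehrhart polynomial L_P have real part equal to -1/a. Then for all integers 0 ≤ s < t ≤ n, the Ehrhart coefficients satisfy ℓ_t(P)/ℓ_s(P) ≤ a^{t-s} · binom(n,t)/binom(n,s). -/
/-!
Put `b = 1/a` and `q(X) = L(X - b)`. The roots of `q` lie in the closed left half-plane
`Re z ≤ 0`, and a real polynomial with positive leading coefficient and all its roots there has
nonnegative coefficients: it is a product of factors `X - r` with `r ≤ 0` and
`X² - 2 Re z X + |z|²` with `Re z ≤ 0`. Expanding `L(X) = q(X + b)` gives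
`ℓ_u = ∑ⱼ qⱼ C(j,u) b^(j-u)` with all `qⱼ ≥ 0`, and the inequality follows termwise from
`C(j,t) C(n,s) ≤ C(n,t) C(j,s)` for `s ≤ t`, `j ≤ n`. The sign of the leading coefficient does
not matter, since the ratio is invariant under `L ↦ -L`.
-/

open MeasureTheory Polynomial Pointwise

theorem Nat.choose_mul_choose_le_choose_mul_choose {n j s t : ℕ} (hst : s ≤ t) (hjn : j ≤ n) :
    j.choose t * n.choose s ≤ n.choose t * j.choose s := by
  refine Nat.le_of_mul_le_mul_right ?_ (Nat.choose_pos hst)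
  calc j.choose t * n.choose s * t.choose s
      = j.choose s * (j - s).choose (t - s) * n.choose s := by
        rw [mul_right_comm, Nat.choose_mul hst]
    _ ≤ j.choose s * (n - s).choose (t - s) * n.choose s := by gcongr
    _ = n.choose t * j.choose s * t.choose s := by
        rw [mul_right_comm (n.choose t), Nat.choose_mul hst]; ring

namespace Polynomial

theorem coeff_taylor_eq_sum {R : Type*} [CommSemiring R] (q : R[X]) (r : R) (u : ℕ) :
    (taylor r q).coeff u = ∑ j ∈ q.support, q.coeff j * j.choose u * r ^ (j - u) := by
  rw [taylor_coeff, hasseDeriv_apply, Polynomial.sum_def, eval_finsetSum]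
  refine Finset.sum_congr rfl fun j _ => ?_
  rw [eval_monomial]; ring

theorem coeff_mul_nonneg {R : Type*} [Semiring R] [PartialOrder R] [IsOrderedRing R] {p q : R[X]}
    (hp : ∀ k, 0 ≤ p.coeff k) (hq : ∀ k, 0 ≤ q.coeff k) (k : ℕ) :
    0 ≤ (p * q).coeff k := by
  rw [coeff_mul]
  exact Finset.sum_nonneg fun x _ => mul_nonneg (hp x.1) (hq x.2)

theorem exists_monic_dvd_of_aeval_eq_zero_of_re_nonpos {p : ℝ[X]} {z : ℂ} (hz : aeval z p = 0)
    (hre : z.re ≤ 0) :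
    ∃ f : ℝ[X], f ∣ p ∧ f.Monic ∧ 0 < f.natDegree ∧ ∀ k, 0 ≤ f.coeff k := by
  by_cases him : z.im = 0
  · have hzre : z = algebraMap ℝ ℂ z.re := Complex.ext (by simp) (by simp [him])
    refine ⟨X - C z.re, ?_, monic_X_sub_C _, by simp, fun k => ?_⟩
    · rw [dvd_iff_isRoot, IsRoot, ← (algebraMap ℝ ℂ).injective.eq_iff,
        ← aeval_algebraMap_apply_eq_algebraMap_eval, ← hzre, hz, map_zero]
    · rw [coeff_sub, coeff_X, coeff_C]
      split_ifs <;> linarith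
  · refine ⟨X ^ 2 - C (2 * z.re) * X + C (‖z‖ ^ 2),
      quadratic_dvd_of_aeval_eq_zero_im_ne_zero p hz him, ?_, ?_, fun k => ?_⟩
    · monicity!
    · have h2 : (X ^ 2 - C (2 * z.re) * X + C (‖z‖ ^ 2) : ℝ[X]).natDegree = 2 := by
        compute_degree!
      omega
    · rw [coeff_add, coeff_sub, coeff_C_mul, coeff_X_pow, coeff_X, coeff_C]
      split_ifs <;> nlinarith [norm_nonneg z]

theorem coeff_nonneg_of_roots_re_nonpos {p : ℝ[X]} (hlc : 0 ≤ p.leadingCoeff)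
    (hroots : ∀ z ∈ (p.map (algebraMap ℝ ℂ)).roots, z.re ≤ 0) (k : ℕ) :
    0 ≤ p.coeff k := by
  induction hn : p.natDegree using Nat.strong_induction_on generalizing p k with
  | _ n ih =>
  rcases Nat.eq_zero_or_pos n with rfl | hpos
  · rcases Nat.eq_zero_or_pos k with rfl | hk
    · rwa [leadingCoeff, hn] at hlc
    · rw [coeff_eq_zero_of_natDegree_lt (hn ▸ hk)]
  have hp0 : p ≠ 0 := by rintro rfl; simp at hn; omega
  obtain ⟨z, hz⟩ := IsAlgClosed.exists_aeval_eq_zero ℂ p (by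
    rw [degree_eq_natDegree hp0]; exact_mod_cast (hn ▸ hpos).ne')
  have hzroot : z ∈ (p.map (algebraMap ℝ ℂ)).roots := by
    rwa [mem_roots (map_ne_zero hp0), IsRoot, eval_map_algebraMap]
  obtain ⟨f, ⟨q, rfl⟩, hf, hfdeg, hfcoeff⟩ :=
    exists_monic_dvd_of_aeval_eq_zero_of_re_nonpos hz (hroots z hzroot)
  have hq0 : q ≠ 0 := right_ne_zero_of_mul hp0
  refine coeff_mul_nonneg hfcoeff (fun k => ih q.natDegree ?_ ?_ ?_ k rfl) k
  · rw [← hn, natDegree_mul hf.ne_zero hq0]; omega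
  · rwa [leadingCoeff_mul, hf.leadingCoeff, one_mul] at hlc
  · intro w hw
    refine hroots w (Multiset.mem_of_le (roots.le_of_dvd (map_ne_zero hp0) ?_) hw)
    rw [Polynomial.map_mul]
    exact dvd_mul_left _ _

theorem pow_mul_coeff_taylor_mul_choose_le {q : ℝ[X]} {b : ℝ} (hb : 0 ≤ b)
    (hq : ∀ j, 0 ≤ q.coeff j) {s t : ℕ} (hst : s ≤ t) :
    b ^ (t - s) * (taylor b q).coeff t * q.natDegree.choose s ≤
      (taylor b q).coeff s * q.natDegree.choose t := by
  rw [coeff_taylor_eq_sum, coeff_taylor_eq_sum, Finset.mul_sum, Finset.sum_mul, Finset.sum_mul]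
  refine Finset.sum_le_sum fun j hj => ?_
  rcases lt_or_ge j t with hjt | htj
  · rw [Nat.choose_eq_zero_of_lt hjt]
    simp only [Nat.cast_zero, mul_zero, zero_mul]
    have := hq j
    positivity
  · have hchoose :
        (j.choose t * q.natDegree.choose s : ℝ) ≤ q.natDegree.choose t * j.choose s := by
      exact_mod_cast Nat.choose_mul_choose_le_choose_mul_choose hst (le_natDegree_of_mem_supp j hj)
    have hpow : b ^ (t - s) * b ^ (j - t) = b ^ (j - s) := by rw [← pow_add]; congr 1; omega
    calc b ^ (t - s) * (q.coeff j * j.choose t * b ^ (j - t)) * q.natDegree.choose s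
        = q.coeff j * b ^ (j - s) * (j.choose t * q.natDegree.choose s) := by rw [← hpow]; ring
      _ ≤ q.coeff j * b ^ (j - s) * (q.natDegree.choose t * j.choose s) := by
        have := hq j
        gcongr
      _ = q.coeff j * j.choose s * b ^ (j - s) * q.natDegree.choose t := by ring

theorem coeff_taylor_pos {q : ℝ[X]} {b : ℝ} (hb : 0 < b) (hq : ∀ j, 0 ≤ q.coeff j)
    (hlc : 0 < q.leadingCoeff) {s : ℕ} (hs : s ≤ q.natDegree) : 0 < (taylor b q).coeff s := by
  rw [coeff_taylor_eq_sum]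
  have hn : q.natDegree ∈ q.support :=
    natDegree_mem_support_of_nonzero (leadingCoeff_ne_zero.1 hlc.ne')
  have hterms : ∀ j ∈ q.support, 0 ≤ q.coeff j * j.choose s * b ^ (j - s) := fun j _ => by
    have := hq j
    positivity
  calc (0 : ℝ) < q.leadingCoeff * q.natDegree.choose s * b ^ (q.natDegree - s) := by
        have := Nat.choose_pos hs
        positivity
    _ ≤ _ := Finset.single_le_sum hterms hn

theorem coeff_div_coeff_le_of_roots_re_le {L : ℝ[X]} {a : ℝ} (ha : 0 < a)
    (hlc : 0 < L.leadingCoeff)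
    (hroots : ∀ z ∈ (L.map (algebraMap ℝ ℂ)).roots, z.re ≤ -1 / a)
    {s t : ℕ} (hst : s ≤ t) (htn : t ≤ L.natDegree) :
    L.coeff t / L.coeff s ≤
      a ^ (t - s) * (L.natDegree.choose t : ℝ) / L.natDegree.choose s := by
  set q := taylor (-(1 / a)) L
  have hLq : L = taylor (1 / a) q := by rw [taylor_taylor, add_neg_cancel, taylor_zero]
  have hL0 : L ≠ 0 := leadingCoeff_ne_zero.1 hlc.ne'
  have hq : ∀ j, 0 ≤ q.coeff j := by
    refine coeff_nonneg_of_roots_re_nonpos (by rw [leadingCoeff_taylor]; exact hlc.le)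
      fun z hz => ?_
    have hq0 : q.map (algebraMap ℝ ℂ) ≠ 0 := map_ne_zero ((taylor_eq_zero _ _).not.2 hL0)
    rw [mem_roots hq0, IsRoot, map_taylor, taylor_eval] at hz
    have := hroots _ ((mem_roots (map_ne_zero hL0)).2 hz)
    simp only [Complex.add_re, Complex.coe_algebraMap, Complex.ofReal_re, neg_div] at this
    linarith
  have hdeg : q.natDegree = L.natDegree := natDegree_taylor _ _
  have hkey := pow_mul_coeff_taylor_mul_choose_le (one_div_pos.2 ha).le hq hst
  have hs := coeff_taylor_pos (one_div_pos.2 ha) hq (by rwa [leadingCoeff_taylor])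
    (hdeg ▸ hst.trans htn)
  rw [← hLq, hdeg] at hkey
  rw [← hLq] at hs
  rw [div_le_div_iff₀ hs (by exact_mod_cast Nat.choose_pos (hst.trans htn))]
  have hab : a ^ (t - s) * (1 / a) ^ (t - s) = 1 := by
    rw [← mul_pow, mul_one_div_cancel ha.ne', one_pow]
  calc L.coeff t * L.natDegree.choose s
      = a ^ (t - s) * ((1 / a) ^ (t - s) * L.coeff t * L.natDegree.choose s) := by
        rw [← mul_assoc, ← mul_assoc, hab, one_mul]
    _ ≤ a ^ (t - s) * (L.coeff s * L.natDegree.choose t) := by gcongr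
    _ = _ := by ring

end Polynomial

theorem ehrhart_coeff_ratio_le_general (n : ℕ) (a : ℝ) (ha : 0 < a)
    (L : Polynomial ℝ) (hdeg : L.natDegree = n)
    (hroots : ∀ z ∈ (L.map (algebraMap ℝ ℂ)).roots, z.re = -1 / a)
    (s t : ℕ) (hst : s < t) (htn : t ≤ n) :
    L.coeff t / L.coeff s ≤ a ^ (t - s) * (n.choose t : ℝ) / (n.choose s : ℝ) := by
  subst hdeg
  have hL0 : L ≠ 0 := by rintro rfl; simp at htn; omega
  have hroots_le : ∀ z ∈ (L.map (algebraMap ℝ ℂ)).roots, z.re ≤ -1 / a :=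
    fun z hz => (hroots z hz).le
  rcases (leadingCoeff_ne_zero.2 hL0).lt_or_gt with hneg | hpos
  · have h := coeff_div_coeff_le_of_roots_re_le (L := -L) ha (by simpa using hneg)
      (by simpa [Polynomial.map_neg, roots_neg] using hroots_le) hst.le (by simpa using htn)
    simpa [neg_div_neg_eq] using h
  · exact coeff_div_coeff_le_of_roots_re_le ha hpos hroots_le hst.le htn

theorem ehrhart_coeff_ratio_le (n : ℕ) (a : ℝ) (ha : 0 < a) (P : Set (Fin n → ℝ))
    (hP : IsLatticePolytope P) (hfull : (interior P).Nonempty)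
    (L : Polynomial ℝ) (hL : IsEhrhartPoly P L) (hdeg : L.natDegree = n)
    (hroots : ∀ z ∈ (L.map (algebraMap ℝ ℂ)).roots, z.re = -1 / a)
    (s t : ℕ) (hst : s < t) (htn : t ≤ n) :
    L.coeff t / L.coeff s ≤ a ^ (t - s) * (n.choose t : ℝ) / (n.choose s : ℝ) :=
  ehrhart_coeff_ratio_le_general n a ha L hdeg hroots s t hst htn
end

section
/- Let a > 0 be a real number and let P ⊂ ℝ^n be an n-dimensional lattice polytope such that all n complex roots of its Ehrhart polynomial L_P have real part equal to -1/a. Then the inequality ℓ_t(P)/ℓ_s(P) ≤ a^{t-s} binom(n,t)/binom(n,s) holds with equality for (s,t) = (n-1,n); that is, a · ℓ_{n-1}(P) = n · vol(P). -/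
open MeasureTheory Polynomial Pointwise

/-!
The leading coefficient of an Ehrhart polynomial is the volume: `L_P(k) / k^n` is the number of
points of the lattice `k⁻¹ ℤ^n` in `P` weighted by the volume `k^{-n}` of a cell, a Riemann sum for
`vol P`, which converges because the boundary of the convex body `P` is null. By Vieta,
`ℓ_{n-1} = -ℓ_n · Σ roots`, and if all `n` roots have real part `-1/a`, their sum, being real,
is `-n/a`. Hence `a ℓ_{n-1} = n ℓ_n = n vol P`, and the ratio identity is the same equation.
-/

theorem Polynomial.nextCoeff_eq_of_forall_roots_re_eq {p : ℝ[X]} {r : ℝ}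
    (h : ∀ z ∈ (p.map (algebraMap ℝ ℂ)).roots, z.re = r) :
    p.nextCoeff = -(p.natDegree * r) * p.leadingCoeff := by
  have hsplit : (p.map (algebraMap ℝ ℂ)).Splits := IsAlgClosed.splits _
  have hre : (p.map (algebraMap ℝ ℂ)).roots.sum.re = p.natDegree * r := by
    rw [← Complex.coe_reAddGroupHom, map_multiset_sum, Complex.coe_reAddGroupHom,
      Multiset.map_congr rfl h, Multiset.map_const',
      Multiset.sum_replicate, ← hsplit.natDegree_eq_card_roots, natDegree_map, nsmul_eq_mul]
  have := congrArg Complex.re hsplit.nextCoeff_eq_neg_sum_roots_mul_leadingCoeff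
  rw [nextCoeff_map (algebraMap ℝ ℂ).injective, leadingCoeff_map] at this
  simpa [hre, mul_comm] using this

theorem IsLatticePolytope.convex {n : ℕ} {P : Set (Fin n → ℝ)} (hP : IsLatticePolytope P) :
    Convex ℝ P := by
  obtain ⟨V, rfl⟩ := hP
  exact convex_convexHull ℝ _

theorem IsLatticePolytope.isCompact {n : ℕ} {P : Set (Fin n → ℝ)} (hP : IsLatticePolytope P) :
    IsCompact P := by
  obtain ⟨V, rfl⟩ := hP
  exact (V.finite_toSet.image _).isCompact_convexHull (𝕜 := ℝ)

theorem latticePointCount_smul_eq_card {n : ℕ} (S : Set (Fin n → ℝ)) (k : ℕ) [NeZero k] :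
    latticePointCount ((k : ℝ) • S) =
      Nat.card ↑(S ∩ (k : ℝ)⁻¹ • Submodule.span ℤ (Set.range (Pi.basisFun ℝ (Fin n)))) := by
  have hk : (k : ℝ) ≠ 0 := NeZero.ne _
  have himage : S ∩ (k : ℝ)⁻¹ • Submodule.span ℤ (Set.range (Pi.basisFun ℝ (Fin n))) =
      (fun v : Fin n → ℤ => (k : ℝ)⁻¹ • fun i => (v i : ℝ)) ''
        {v | (fun i => (v i : ℝ)) ∈ (k : ℝ) • S} := by
    ext x
    simp only [Set.mem_inter_iff, ← Submodule.coe_pointwise_smul, SetLike.mem_coe,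
      BoxIntegral.unitPartition.mem_smul_span_iff, Set.mem_image, Set.mem_ofPred_eq,
      Set.mem_smul_set_iff_inv_smul_mem₀ hk]
    constructor
    · rintro ⟨hxS, hx⟩
      choose v hv using hx
      have hvx : ((k : ℝ)⁻¹ • fun i => (v i : ℝ)) = x := by
        ext i
        simp only [algebraMap_int_eq, eq_intCast] at hv
        simp [hv, hk]
      exact ⟨v, hvx ▸ hxS, hvx⟩
    · rintro ⟨v, hv, rfl⟩
      exact ⟨hv, fun i => ⟨v i, by simp [hk]⟩⟩
  have hinj : Function.Injective fun v : Fin n → ℤ => (k : ℝ)⁻¹ • fun i => (v i : ℝ) := by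
    intro v w h
    ext i
    simpa [hk] using congrFun h i
  rw [himage, Nat.card_coe_set_eq, Set.ncard_image_of_injective _ hinj, latticePointCount]

open Filter Topology Bornology

theorem tendsto_latticePointCount_smul_div_pow {n : ℕ} {S : Set (Fin n → ℝ)} (hb : IsBounded S)
    (hm : MeasurableSet S) (hfr : volume (frontier S) = 0) :
    Tendsto (fun k : ℕ => (latticePointCount ((k : ℝ) • S) : ℝ) / (k : ℝ) ^ n) atTop
      (𝓝 (volume.real S)) := by
  refine (tendsto_card_div_pow_atTop_volume S hb hm hfr).congr' ?_
  filter_upwards [eventually_gt_atTop 0] with k hk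
  have : NeZero k := NeZero.of_pos hk
  rw [latticePointCount_smul_eq_card, Fintype.card_fin]

theorem IsEhrhartPoly.leadingCoeff_eq_volumeReal {n : ℕ} {P : Set (Fin n → ℝ)} {L : ℝ[X]}
    (hL : IsEhrhartPoly P L) (hdeg : L.degree = n) (hb : IsBounded P) (hm : MeasurableSet P)
    (hfr : volume (frontier P) = 0) : L.leadingCoeff = volume.real P := by
  have hpoly : Tendsto (fun k : ℕ => L.eval (k : ℝ) / (X ^ n : ℝ[X]).eval (k : ℝ)) atTop
      (𝓝 (L.leadingCoeff / (X ^ n : ℝ[X]).leadingCoeff)) :=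
    (div_tendsto_atTop_leadingCoeff_div_of_degree_eq (P := L) (Q := X ^ n)
      (by rw [hdeg, degree_X_pow])).comp tendsto_natCast_atTop_atTop
  rw [leadingCoeff_X_pow, div_one] at hpoly
  refine tendsto_nhds_unique hpoly ((tendsto_latticePointCount_smul_div_pow hb hm hfr).congr' ?_)
  filter_upwards [eventually_gt_atTop 0] with k hk
  rw [hL k hk, eval_X_pow]

theorem ehrhart_coeff_ratio_eq_top_general (n : ℕ) (hn : 1 ≤ n) (a : ℝ) (ha : 0 < a)
    (P : Set (Fin n → ℝ))
    (hP : IsLatticePolytope P)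
    (L : Polynomial ℝ) (hL : IsEhrhartPoly P L) (hdeg : L.natDegree = n)
    (hroots : ∀ z ∈ (L.map (algebraMap ℝ ℂ)).roots, z.re = -1 / a) :
    L.coeff n / L.coeff (n - 1) =
      a ^ (n - (n - 1)) * (n.choose n : ℝ) / (n.choose (n - 1) : ℝ) ∧
    a * L.coeff (n - 1) = (n : ℝ) * (volume P).toReal := by
  have hL0 : L ≠ 0 := by rintro rfl; simp at hdeg; omega
  have hlead : L.leadingCoeff = L.coeff n := by rw [leadingCoeff, hdeg]
  have hvol : L.leadingCoeff = volume.real P :=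
    hL.leadingCoeff_eq_volumeReal (by rw [degree_eq_natDegree hL0, hdeg])
      hP.isCompact.isBounded hP.isCompact.isClosed.measurableSet
      (hP.convex.addHaar_frontier volume)
  have hrel : L.coeff (n - 1) = -(n * (-1 / a)) * L.coeff n := by
    have := nextCoeff_eq_of_forall_roots_re_eq hroots
    rwa [nextCoeff_of_natDegree_pos (by omega), hlead, hdeg] at this
  have hcn : L.coeff n ≠ 0 := hlead ▸ leadingCoeff_ne_zero.mpr hL0
  constructor
  · rw [hrel, show n - (n - 1) = 1 by omega, Nat.choose_self, Nat.choose_symm hn,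
      Nat.choose_one_right, Nat.cast_one]
    field_simp
  · rw [hrel, ← measureReal_def, ← hvol, hlead]
    field_simp

theorem ehrhart_coeff_ratio_eq_top (n : ℕ) (hn : 1 ≤ n) (a : ℝ) (ha : 0 < a)
    (P : Set (Fin n → ℝ))
    (hP : IsLatticePolytope P) (hfull : (interior P).Nonempty)
    (L : Polynomial ℝ) (hL : IsEhrhartPoly P L) (hdeg : L.natDegree = n)
    (hroots : ∀ z ∈ (L.map (algebraMap ℝ ℂ)).roots, z.re = -1 / a) :
    L.coeff n / L.coeff (n - 1) =
      a ^ (n - (n - 1)) * (n.choose n : ℝ) / (n.choose (n - 1) : ℝ) ∧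
    a * L.coeff (n - 1) = (n : ℝ) * (volume P).toReal :=
  ehrhart_coeff_ratio_eq_top_general n hn a ha P hP L hL hdeg hroots
end
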